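/- Let R > 0, p ∈ [1, ∞), and let μ, μ̃ be Borel probability measures on ℝ^d supported in the closed ball B̄(R). Then for every z ∈ ℝ^d and every coupling π of μ and μ̃, one has ‖γ(z, μ) − γ(z, μ̃)‖ ≤ (1 + 2R‖z‖) · exp(2R‖z‖ / p) · (∫ ‖x − y‖^p dπ(x, y))^{1/p}. In particular γ(z, ·) is Lipschitz with constant (1 + 2R‖z‖) exp(2R‖z‖/p) with respect to the p-Wasserstein distance on probability measures supported in B̄(R). -/

import Mathlib

open MeasureTheory
open scoped RealInnerProductSpace

/-!
Write `e(x) = exp ⟪z, x⟫`, `a = γ₂(z, μ)` and `b = γ₂(z, μ')`. For every `c`, integrating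
`e(x) (x - c) - e(y) (y - c)` against the coupling `π` gives `a (γ(z, μ) - c) - b (γ(z, μ') - c)`;
the choices `c = γ(z, μ')` and `c = γ(z, μ)` bound `(a + b)/2 ‖γ(z, μ) - γ(z, μ')‖` by the integral
of the norm of the integrand. On `B̄(R)` that norm is at most `(1 + 2R‖z‖) (e(x) + e(y))/2 ‖x - y‖`
because `|eˢ - eᵗ| ≤ (eˢ + eᵗ)/2 |s - t|`. Hence `‖γ(z, μ) - γ(z, μ')‖ ≤ (1 + 2R‖z‖) ∫ k ‖x - y‖ dπ`
for the probability density `k = (e(x) + e(y))/(a + b)`, which is at most `exp(2R‖z‖)`, and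
Hölder's inequality against `k π` finishes the proof.
-/

/-- The normalisation constant `γ₂(z, μ) = ∫ exp⟨z,y⟩ dμ(y)`. -/
noncomputable def gamma2 {d : ℕ} (z : EuclideanSpace ℝ (Fin d))
    (μ : Measure (EuclideanSpace ℝ (Fin d))) : ℝ :=
  ∫ y, Real.exp ⟪z, y⟫ ∂μ

/-- The attention map `γ(z, μ) = (∫ exp⟨z,y⟩ • y dμ(y)) / γ₂(z, μ)`. -/
noncomputable def gammaAttn {d : ℕ} (z : EuclideanSpace ℝ (Fin d))
    (μ : Measure (EuclideanSpace ℝ (Fin d))) : EuclideanSpace ℝ (Fin d) :=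
  (gamma2 z μ)⁻¹ • ∫ y, Real.exp ⟪z, y⟫ • y ∂μ

namespace Real

theorem exp_sub_one_le_mul {u : ℝ} (hu : 0 ≤ u) : exp u - 1 ≤ (1 + exp u) / 2 * u := by
  -- `u + u eᵘ - 2 eᵘ` is monotone: its derivative `1 - (1 - u) eᵘ` is `≥ 0` as `1 - u ≤ e⁻ᵘ`
  have hderiv (x : ℝ) :
      HasDerivAt (fun u => u + u * exp u - 2 * exp u) (1 + (x - 1) * exp x) x := by
    refine (((hasDerivAt_id' x).add ((hasDerivAt_id' x).mul (hasDerivAt_exp x))).sub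
      ((hasDerivAt_exp x).const_mul 2)).congr_deriv ?_
    ring
  have hderiv_nonneg (x : ℝ) : 0 ≤ 1 + (x - 1) * exp x := by
    have h := mul_le_mul_of_nonneg_right (by linarith [add_one_le_exp (-x)] : 1 - x ≤ exp (-x))
      (exp_pos x).le
    rw [← exp_add, neg_add_cancel, exp_zero] at h
    linarith
  have := monotone_of_hasDerivAt_nonneg hderiv hderiv_nonneg hu
  simp only [zero_add, zero_mul, exp_zero] at this
  linarith

theorem abs_exp_sub_exp_le (s t : ℝ) : |exp s - exp t| ≤ (exp s + exp t) / 2 * |s - t| := by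
  wlog hts : t ≤ s generalizing s t
  · rw [abs_sub_comm, abs_sub_comm s, add_comm]
    exact this t s (le_of_not_ge hts)
  have hs : exp s = exp t * exp (s - t) := by rw [← exp_add, add_sub_cancel]
  have hmul := mul_le_mul_of_nonneg_left (exp_sub_one_le_mul (sub_nonneg.2 hts)) (exp_pos t).le
  rw [abs_of_nonneg (sub_nonneg.2 (exp_le_exp.2 hts)), abs_of_nonneg (sub_nonneg.2 hts), hs]
  linarith

end Real

section InnerProduct

variable {F : Type*} [NormedAddCommGroup F] [InnerProductSpace ℝ F] {R : ℝ} {x y c : F}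

theorem abs_inner_le_of_norm_le (z : F) (hx : ‖x‖ ≤ R) : |⟪z, x⟫| ≤ R * ‖z‖ :=
  (abs_real_inner_le_norm z x).trans <| by rw [mul_comm]; gcongr

theorem exp_inner_le (z : F) (hx : ‖x‖ ≤ R) : Real.exp ⟪z, x⟫ ≤ Real.exp (R * ‖z‖) :=
  Real.exp_le_exp.2 (abs_le.1 (abs_inner_le_of_norm_le z hx)).2

theorem exp_neg_le_exp_inner (z : F) (hx : ‖x‖ ≤ R) :
    Real.exp (-(R * ‖z‖)) ≤ Real.exp ⟪z, x⟫ :=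
  Real.exp_le_exp.2 (abs_le.1 (abs_inner_le_of_norm_le z hx)).1

theorem norm_exp_inner_smul_sub_sub_le (z : F) (hx : ‖x‖ ≤ R) (hy : ‖y‖ ≤ R) (hc : ‖c‖ ≤ R) :
    ‖Real.exp ⟪z, x⟫ • (x - c) - Real.exp ⟪z, y⟫ • (y - c)‖ ≤
      (1 + 2 * R * ‖z‖) * ((Real.exp ⟪z, x⟫ + Real.exp ⟪z, y⟫) / 2) * ‖x - y‖ := by
  set e₁ := Real.exp ⟪z, x⟫
  set e₂ := Real.exp ⟪z, y⟫
  have hsplit : e₁ • (x - c) - e₂ • (y - c) =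
      ((e₁ + e₂) / 2) • (x - y) + ((e₁ - e₂) / 2) • ((x - c) + (y - c)) := by
    module
  have hdiff : |e₁ - e₂| ≤ (e₁ + e₂) / 2 * (‖z‖ * ‖x - y‖) :=
    (Real.abs_exp_sub_exp_le _ _).trans <| mul_le_mul_of_nonneg_left
      (by rw [← inner_sub_right]; exact abs_real_inner_le_norm z (x - y)) (by positivity)
  have hsum : ‖(x - c) + (y - c)‖ ≤ 4 * R := by
    linarith [norm_add_le (x - c) (y - c), norm_sub_le x c, norm_sub_le y c]
  calc ‖e₁ • (x - c) - e₂ • (y - c)‖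
      ≤ (e₁ + e₂) / 2 * ‖x - y‖ + |e₁ - e₂| / 2 * ‖(x - c) + (y - c)‖ := by
        rw [hsplit]
        refine (norm_add_le _ _).trans_eq ?_
        rw [norm_smul, norm_smul, Real.norm_of_nonneg (by positivity), Real.norm_eq_abs, abs_div,
          abs_two]
    _ ≤ (e₁ + e₂) / 2 * ‖x - y‖ + (e₁ + e₂) / 2 * (‖z‖ * ‖x - y‖) / 2 * (4 * R) := by
        gcongr
    _ = (1 + 2 * R * ‖z‖) * ((e₁ + e₂) / 2) * ‖x - y‖ := by ring

end InnerProduct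

namespace MeasureTheory

variable {α β G : Type*} [MeasurableSpace α] [MeasurableSpace β] [NormedAddCommGroup G]

theorem memLp_ofReal_of_integrable_rpow {μ : Measure α} {f : α → ℝ} {p : ℝ} (hp : 0 < p)
    (hf : AEStronglyMeasurable f μ) (hf₀ : 0 ≤ᵐ[μ] f) (hint : Integrable (fun x => f x ^ p) μ) :
    MemLp f (ENNReal.ofReal p) μ := by
  refine (integrable_norm_rpow_iff hf (by simpa using hp) ENNReal.ofReal_ne_top).1 (hint.congr ?_)
  filter_upwards [hf₀] with x hx
  rw [ENNReal.toReal_ofReal hp.le, Real.norm_of_nonneg hx]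

theorem integral_mul_le_integral_mul_rpow {μ : Measure α} {k w : α → ℝ} {p : ℝ} (hp : 1 ≤ p)
    (hk : 0 ≤ᵐ[μ] k) (hw : 0 ≤ᵐ[μ] w)
    (hk_int : Integrable k μ) (hw_meas : AEStronglyMeasurable w μ)
    (hkw_int : Integrable (fun x => k x * w x ^ p) μ) (hk_one : ∫ x, k x ∂μ ≤ 1) :
    ∫ x, k x * w x ∂μ ≤ (∫ x, k x * w x ^ p ∂μ) ^ (1 / p) := by
  rcases hp.eq_or_lt with rfl | hp
  · simp
  -- Hölder with exponents `p' = p / (p - 1)` and `p` for `k w = k ^ (1 / p') * (k ^ (1 / p) * w)`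
  have hpq : (p / (p - 1)).HolderConjugate p := (Real.HolderConjugate.conjExponent hp).symm
  set p' := p / (p - 1)
  have hp₀ : 0 < p := hpq.symm.pos
  have hp'₀ : 0 < p' := hpq.pos
  have hk_pow : ∀ᵐ x ∂μ, (k x ^ (1 / p')) ^ p' = k x := by
    filter_upwards [hk] with x hx
    rw [← Real.rpow_mul hx, one_div_mul_cancel hp'₀.ne', Real.rpow_one]
  have hkw_pow : ∀ᵐ x ∂μ, (k x ^ (1 / p) * w x) ^ p = k x * w x ^ p := by
    filter_upwards [hk, hw] with x hkx hwx
    rw [Real.mul_rpow (Real.rpow_nonneg hkx _) hwx, ← Real.rpow_mul hkx,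
      one_div_mul_cancel hp₀.ne', Real.rpow_one]
  have hsum : 1 / p' + 1 / p = 1 := by simpa only [one_div] using hpq.inv_add_inv_eq_one
  have hsplit : ∀ᵐ x ∂μ, k x ^ (1 / p') * (k x ^ (1 / p) * w x) = k x * w x := by
    filter_upwards [hk] with x hx
    rw [← mul_assoc, ← Real.rpow_add' hx (by rw [hsum]; exact one_ne_zero), hsum, Real.rpow_one]
  have hk_root : 0 ≤ᵐ[μ] fun x => k x ^ (1 / p') := hk.mono fun x hx => Real.rpow_nonneg hx _
  have hkw_root : 0 ≤ᵐ[μ] fun x => k x ^ (1 / p) * w x := by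
    filter_upwards [hk, hw] with x hkx hwx using mul_nonneg (Real.rpow_nonneg hkx _) hwx
  have hmem₁ := memLp_ofReal_of_integrable_rpow hp'₀
    (hk_int.aemeasurable.pow_const _).aestronglyMeasurable hk_root
    (hk_int.congr (hk_pow.mono fun x hx => hx.symm))
  have hmem₂ := memLp_ofReal_of_integrable_rpow hp₀
    ((hk_int.aemeasurable.pow_const _).mul hw_meas.aemeasurable).aestronglyMeasurable hkw_root
    (hkw_int.congr (hkw_pow.mono fun x hx => hx.symm))
  calc ∫ x, k x * w x ∂μ = ∫ x, k x ^ (1 / p') * (k x ^ (1 / p) * w x) ∂μ :=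
        integral_congr_ae (hsplit.mono fun x hx => hx.symm)
    _ ≤ (∫ x, (k x ^ (1 / p')) ^ p' ∂μ) ^ (1 / p') *
          (∫ x, (k x ^ (1 / p) * w x) ^ p ∂μ) ^ (1 / p) :=
        integral_mul_le_Lp_mul_Lq_of_nonneg hpq hk_root hkw_root hmem₁ hmem₂
    _ ≤ (∫ x, k x * w x ^ p ∂μ) ^ (1 / p) := by
        rw [integral_congr_ae hk_pow, integral_congr_ae hkw_pow]
        refine mul_le_of_le_one_left (Real.rpow_nonneg (integral_nonneg_of_ae ?_) _)
          (Real.rpow_le_one (integral_nonneg_of_ae hk) hk_one (by positivity))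
        filter_upwards [hk, hw] with x hkx hwx using mul_nonneg hkx (Real.rpow_nonneg hwx _)

theorem _root_.Continuous.integrable_of_ae_mem_isCompact [TopologicalSpace α] [T2Space α]
    [OpensMeasurableSpace α] {μ : Measure α} [IsFiniteMeasure μ] {K : Set α} {f : α → G}
    (hf : Continuous f) (hK : IsCompact K) (hμK : ∀ᵐ x ∂μ, x ∈ K) : Integrable f μ := by
  rw [← Measure.restrict_eq_self_of_ae_mem hμK]
  exact hf.continuousOn.integrableOn_compact hK

theorem Measure.ae_mem_prod_of_ae_fst_ae_snd {π : Measure (α × β)} {s : Set α} {t : Set β}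
    (hs : ∀ᵐ x ∂π.fst, x ∈ s) (ht : ∀ᵐ y ∂π.snd, y ∈ t) : ∀ᵐ q ∂π, q ∈ s ×ˢ t := by
  filter_upwards [ae_of_ae_map measurable_fst.aemeasurable hs,
    ae_of_ae_map measurable_snd.aemeasurable ht] with q hq₁ hq₂
  exact ⟨hq₁, hq₂⟩

theorem Measure.integral_comp_fst [NormedSpace ℝ G] {π : Measure (α × β)} {f : α → G}
    (hf : AEStronglyMeasurable f π.fst) : ∫ q, f q.1 ∂π = ∫ x, f x ∂π.fst :=
  (integral_map measurable_fst.aemeasurable hf).symm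

theorem Measure.integral_comp_snd [NormedSpace ℝ G] {π : Measure (α × β)} {f : β → G}
    (hf : AEStronglyMeasurable f π.snd) : ∫ q, f q.2 ∂π = ∫ y, f y ∂π.snd :=
  (integral_map measurable_snd.aemeasurable hf).symm

end MeasureTheory

section Attention

local notation "ℝ^" n:max => EuclideanSpace ℝ (Fin n)

variable {d : ℕ} {R : ℝ} {z : ℝ^d}
  {μ μ' : Measure (ℝ^d)} [IsProbabilityMeasure μ] [IsProbabilityMeasure μ']

theorem exp_neg_le_gamma2 (hμ : ∀ᵐ y ∂μ, y ∈ Metric.closedBall 0 R) :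
    Real.exp (-(R * ‖z‖)) ≤ gamma2 z μ := by
  have h := integral_mono_ae (integrable_const _)
    ((by fun_prop : Continuous fun y => Real.exp ⟪z, y⟫).integrable_of_ae_mem_isCompact
      (isCompact_closedBall 0 R) hμ)
    (hμ.mono fun y hy => exp_neg_le_exp_inner z (mem_closedBall_zero_iff.1 hy))
  simpa [gamma2] using h

theorem gamma2_pos (hμ : ∀ᵐ y ∂μ, y ∈ Metric.closedBall 0 R) : 0 < gamma2 z μ :=
  (Real.exp_pos _).trans_le (exp_neg_le_gamma2 hμ)

theorem norm_gammaAttn_le (hμ : ∀ᵐ y ∂μ, y ∈ Metric.closedBall 0 R) : ‖gammaAttn z μ‖ ≤ R := by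
  have hpos := gamma2_pos (z := z) hμ
  have hint : ‖∫ y, Real.exp ⟪z, y⟫ • y ∂μ‖ ≤ R * gamma2 z μ := by
    rw [gamma2, ← integral_const_mul]
    refine norm_integral_le_of_norm_le
      ((by fun_prop : Continuous fun y => R * Real.exp ⟪z, y⟫)
        |>.integrable_of_ae_mem_isCompact (isCompact_closedBall 0 R) hμ) ?_
    filter_upwards [hμ] with y hy
    rw [norm_smul, Real.norm_of_nonneg (Real.exp_pos _).le, mul_comm]
    exact mul_le_mul_of_nonneg_right (mem_closedBall_zero_iff.1 hy) (Real.exp_pos _).le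
  rw [gammaAttn, norm_smul, Real.norm_of_nonneg (inv_pos.2 hpos).le, inv_mul_le_iff₀ hpos,
    mul_comm]
  exact hint

theorem integral_exp_inner_smul_sub (hμ : ∀ᵐ y ∂μ, y ∈ Metric.closedBall 0 R) (c : ℝ^d) :
    ∫ y, Real.exp ⟪z, y⟫ • (y - c) ∂μ = gamma2 z μ • (gammaAttn z μ - c) := by
  have hball := isCompact_closedBall (0 : ℝ^d) R
  simp_rw [smul_sub]
  rw [integral_sub ((by fun_prop : Continuous fun y => Real.exp ⟪z, y⟫ • y)
      |>.integrable_of_ae_mem_isCompact hball hμ)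
    ((by fun_prop : Continuous fun y => Real.exp ⟪z, y⟫ • c)
      |>.integrable_of_ae_mem_isCompact hball hμ),
    integral_smul_const, gammaAttn, smul_smul, mul_inv_cancel₀ (gamma2_pos hμ).ne', one_smul,
    gamma2]

variable {π : Measure (ℝ^d × ℝ^d)} [IsFiniteMeasure π]

theorem Continuous.integrable_of_ae_mem_closedBall_prod {G : Type*} [NormedAddCommGroup G]
    {f : ℝ^d × ℝ^d → G} (hf : Continuous f)
    (hπ : ∀ᵐ q ∂π, q ∈ Metric.closedBall 0 R ×ˢ Metric.closedBall 0 R) : Integrable f π :=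
  hf.integrable_of_ae_mem_isCompact
    ((isCompact_closedBall 0 R).prod (isCompact_closedBall 0 R)) hπ

theorem integral_coupling_exp_inner_smul_sub (hfst : π.fst = μ) (hsnd : π.snd = μ')
    (hμ : ∀ᵐ y ∂μ, y ∈ Metric.closedBall 0 R) (hμ' : ∀ᵐ y ∂μ', y ∈ Metric.closedBall 0 R)
    (c : ℝ^d) :
    ∫ q, (Real.exp ⟪z, q.1⟫ • (q.1 - c) - Real.exp ⟪z, q.2⟫ • (q.2 - c)) ∂π =
      gamma2 z μ • (gammaAttn z μ - c) - gamma2 z μ' • (gammaAttn z μ' - c) := by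
  have hπ := Measure.ae_mem_prod_of_ae_fst_ae_snd (hfst ▸ hμ) (hsnd ▸ hμ')
  have hcont : Continuous fun y : ℝ^d => Real.exp ⟪z, y⟫ • (y - c) := by fun_prop
  rw [integral_sub
      ((by fun_prop : Continuous fun q : ℝ^d × ℝ^d => Real.exp ⟪z, q.1⟫ • (q.1 - c))
        |>.integrable_of_ae_mem_closedBall_prod hπ)
      ((by fun_prop : Continuous fun q : ℝ^d × ℝ^d => Real.exp ⟪z, q.2⟫ • (q.2 - c))
        |>.integrable_of_ae_mem_closedBall_prod hπ),
    Measure.integral_comp_fst hcont.aestronglyMeasurable,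
    Measure.integral_comp_snd hcont.aestronglyMeasurable, hfst, hsnd,
    integral_exp_inner_smul_sub hμ, integral_exp_inner_smul_sub hμ']

omit [IsProbabilityMeasure μ] [IsProbabilityMeasure μ'] in
theorem norm_integral_coupling_exp_inner_smul_sub_le (z : ℝ^d)
    (hπ : ∀ᵐ q ∂π, q ∈ Metric.closedBall 0 R ×ˢ Metric.closedBall 0 R)
    {c : ℝ^d} (hc : ‖c‖ ≤ R) :
    ‖∫ q, (Real.exp ⟪z, q.1⟫ • (q.1 - c) - Real.exp ⟪z, q.2⟫ • (q.2 - c)) ∂π‖ ≤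
      (1 + 2 * R * ‖z‖) * ∫ q, (Real.exp ⟪z, q.1⟫ + Real.exp ⟪z, q.2⟫) / 2 * ‖q.1 - q.2‖ ∂π := by
  rw [← integral_const_mul]
  refine norm_integral_le_of_norm_le
    ((by fun_prop : Continuous fun q : ℝ^d × ℝ^d =>
      (1 + 2 * R * ‖z‖) * ((Real.exp ⟪z, q.1⟫ + Real.exp ⟪z, q.2⟫) / 2 * ‖q.1 - q.2‖))
      |>.integrable_of_ae_mem_closedBall_prod hπ) ?_
  filter_upwards [hπ] with q ⟨hq₁, hq₂⟩
  rw [← mul_assoc]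
  exact norm_exp_inner_smul_sub_sub_le z (mem_closedBall_zero_iff.1 hq₁)
    (mem_closedBall_zero_iff.1 hq₂) hc

noncomputable def attnCouplingDensity (z : ℝ^d) (μ μ' : Measure (ℝ^d)) (q : ℝ^d × ℝ^d) : ℝ :=
  (Real.exp ⟪z, q.1⟫ + Real.exp ⟪z, q.2⟫) / (gamma2 z μ + gamma2 z μ')

omit [IsProbabilityMeasure μ] [IsProbabilityMeasure μ'] in
theorem attnCouplingDensity_nonneg (q : ℝ^d × ℝ^d) : 0 ≤ attnCouplingDensity z μ μ' q := by
  have hγ (ν : Measure (ℝ^d)) : 0 ≤ gamma2 z ν := integral_nonneg fun y => (Real.exp_pos _).le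
  unfold attnCouplingDensity
  have := hγ μ; have := hγ μ'
  positivity

omit [IsProbabilityMeasure μ] [IsProbabilityMeasure μ'] in
theorem continuous_attnCouplingDensity : Continuous (attnCouplingDensity z μ μ') := by
  unfold attnCouplingDensity
  fun_prop

theorem integral_attnCouplingDensity (hfst : π.fst = μ) (hsnd : π.snd = μ')
    (hμ : ∀ᵐ y ∂μ, y ∈ Metric.closedBall 0 R) (hμ' : ∀ᵐ y ∂μ', y ∈ Metric.closedBall 0 R) :
    ∫ q, attnCouplingDensity z μ μ' q ∂π = 1 := by
  have hπ := Measure.ae_mem_prod_of_ae_fst_ae_snd (hfst ▸ hμ) (hsnd ▸ hμ')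
  have hcont : Continuous fun y : ℝ^d => Real.exp ⟪z, y⟫ := by fun_prop
  simp_rw [attnCouplingDensity, div_eq_mul_inv]
  rw [integral_mul_const, integral_add
      ((by fun_prop : Continuous fun q : ℝ^d × ℝ^d => Real.exp ⟪z, q.1⟫)
        |>.integrable_of_ae_mem_closedBall_prod hπ)
      ((by fun_prop : Continuous fun q : ℝ^d × ℝ^d => Real.exp ⟪z, q.2⟫)
        |>.integrable_of_ae_mem_closedBall_prod hπ),
    Measure.integral_comp_fst hcont.aestronglyMeasurable,
    Measure.integral_comp_snd hcont.aestronglyMeasurable, hfst, hsnd]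
  exact mul_inv_cancel₀ (add_pos (gamma2_pos hμ) (gamma2_pos hμ')).ne'

theorem attnCouplingDensity_le (hμ : ∀ᵐ y ∂μ, y ∈ Metric.closedBall 0 R)
    (hμ' : ∀ᵐ y ∂μ', y ∈ Metric.closedBall 0 R) {q : ℝ^d × ℝ^d}
    (hq : q ∈ Metric.closedBall 0 R ×ˢ Metric.closedBall 0 R) :
    attnCouplingDensity z μ μ' q ≤ Real.exp (2 * R * ‖z‖) := by
  have h₁ := exp_inner_le z (mem_closedBall_zero_iff.1 hq.1)
  have h₂ := exp_inner_le z (mem_closedBall_zero_iff.1 hq.2)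
  have ha := exp_neg_le_gamma2 (z := z) hμ
  have hb := exp_neg_le_gamma2 (z := z) hμ'
  have hexp : Real.exp (2 * R * ‖z‖) * Real.exp (-(R * ‖z‖)) = Real.exp (R * ‖z‖) := by
    rw [← Real.exp_add]; ring_nf
  rw [attnCouplingDensity, div_le_iff₀ (add_pos (gamma2_pos hμ) (gamma2_pos hμ'))]
  nlinarith [Real.exp_pos (2 * R * ‖z‖)]

theorem integral_attnCouplingDensity_mul_norm_sub_le {p : ℝ} (hp : 1 ≤ p) (hfst : π.fst = μ)
    (hsnd : π.snd = μ') (hμ : ∀ᵐ y ∂μ, y ∈ Metric.closedBall 0 R)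
    (hμ' : ∀ᵐ y ∂μ', y ∈ Metric.closedBall 0 R) :
    ∫ q, attnCouplingDensity z μ μ' q * ‖q.1 - q.2‖ ∂π ≤
      Real.exp (2 * R * ‖z‖ / p) * (∫ q, ‖q.1 - q.2‖ ^ p ∂π) ^ (1 / p) := by
  have hπ := Measure.ae_mem_prod_of_ae_fst_ae_snd (hfst ▸ hμ) (hsnd ▸ hμ')
  have hw : Continuous fun q : ℝ^d × ℝ^d => ‖q.1 - q.2‖ := by fun_prop
  have hwp : Continuous fun q : ℝ^d × ℝ^d => ‖q.1 - q.2‖ ^ p :=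
    hw.rpow_const fun _ => Or.inr (by linarith)
  have hk := continuous_attnCouplingDensity (z := z) (μ := μ) (μ' := μ')
  have hweighted : ∫ q, attnCouplingDensity z μ μ' q * ‖q.1 - q.2‖ ^ p ∂π ≤
      Real.exp (2 * R * ‖z‖) * ∫ q, ‖q.1 - q.2‖ ^ p ∂π := by
    rw [← integral_const_mul]
    refine integral_mono_ae ((hk.mul hwp).integrable_of_ae_mem_closedBall_prod hπ)
      ((hwp.integrable_of_ae_mem_closedBall_prod hπ).const_mul _) ?_
    filter_upwards [hπ] with q hq
    exact mul_le_mul_of_nonneg_right (attnCouplingDensity_le hμ hμ' hq) (by positivity)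
  calc ∫ q, attnCouplingDensity z μ μ' q * ‖q.1 - q.2‖ ∂π
      ≤ (∫ q, attnCouplingDensity z μ μ' q * ‖q.1 - q.2‖ ^ p ∂π) ^ (1 / p) :=
        integral_mul_le_integral_mul_rpow hp (ae_of_all _ attnCouplingDensity_nonneg)
          (ae_of_all _ fun q => norm_nonneg _) (hk.integrable_of_ae_mem_closedBall_prod hπ)
          hw.aestronglyMeasurable ((hk.mul hwp).integrable_of_ae_mem_closedBall_prod hπ)
          (integral_attnCouplingDensity hfst hsnd hμ hμ').le
    _ ≤ (Real.exp (2 * R * ‖z‖) * ∫ q, ‖q.1 - q.2‖ ^ p ∂π) ^ (1 / p) :=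
        Real.rpow_le_rpow (integral_nonneg fun q =>
          mul_nonneg (attnCouplingDensity_nonneg q) (by positivity)) hweighted (by positivity)
    _ = Real.exp (2 * R * ‖z‖ / p) * (∫ q, ‖q.1 - q.2‖ ^ p ∂π) ^ (1 / p) := by
        rw [Real.mul_rpow (Real.exp_pos _).le (integral_nonneg fun q => by positivity),
          ← Real.exp_mul, mul_one_div]

theorem norm_gammaAttn_sub_le (hfst : π.fst = μ) (hsnd : π.snd = μ')
    (hμ : ∀ᵐ y ∂μ, y ∈ Metric.closedBall 0 R) (hμ' : ∀ᵐ y ∂μ', y ∈ Metric.closedBall 0 R) :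
    ‖gammaAttn z μ - gammaAttn z μ'‖ ≤
      (1 + 2 * R * ‖z‖) * ∫ q, attnCouplingDensity z μ μ' q * ‖q.1 - q.2‖ ∂π := by
  have hπ := Measure.ae_mem_prod_of_ae_fst_ae_snd (hfst ▸ hμ) (hsnd ▸ hμ')
  have ha := gamma2_pos (z := z) hμ
  have hb := gamma2_pos (z := z) hμ'
  have hmean : ∫ q, (Real.exp ⟪z, q.1⟫ + Real.exp ⟪z, q.2⟫) / 2 * ‖q.1 - q.2‖ ∂π =
      (gamma2 z μ + gamma2 z μ') / 2 * ∫ q, attnCouplingDensity z μ μ' q * ‖q.1 - q.2‖ ∂π := by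
    rw [← integral_const_mul]
    congr 1 with q
    rw [attnCouplingDensity]
    field_simp
  have h₁ := norm_integral_coupling_exp_inner_smul_sub_le z hπ (norm_gammaAttn_le (z := z) hμ')
  have h₂ := norm_integral_coupling_exp_inner_smul_sub_le z hπ (norm_gammaAttn_le (z := z) hμ)
  rw [integral_coupling_exp_inner_smul_sub hfst hsnd hμ hμ', sub_self, smul_zero, sub_zero,
    norm_smul, Real.norm_of_nonneg ha.le, hmean] at h₁
  rw [integral_coupling_exp_inner_smul_sub hfst hsnd hμ hμ', sub_self, smul_zero, zero_sub,
    norm_neg, norm_smul, Real.norm_of_nonneg hb.le, norm_sub_rev, hmean] at h₂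
  have hsum : 0 < (gamma2 z μ + gamma2 z μ') / 2 := by positivity
  refine le_of_mul_le_mul_left ?_ hsum
  linarith

end Attention

theorem stmt_4 {d : ℕ} (R p : ℝ) (hp : 1 ≤ p)
    (μ μ' : Measure (EuclideanSpace ℝ (Fin d)))
    [IsProbabilityMeasure μ] [IsProbabilityMeasure μ']
    (hμ : μ (Metric.closedBall 0 R) = 1) (hμ' : μ' (Metric.closedBall 0 R) = 1)
    (z : EuclideanSpace ℝ (Fin d))
    (π : Measure (EuclideanSpace ℝ (Fin d) × EuclideanSpace ℝ (Fin d)))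
    [IsProbabilityMeasure π] (hfst : π.fst = μ) (hsnd : π.snd = μ') :
    ‖gammaAttn z μ - gammaAttn z μ'‖ ≤
      (1 + 2 * R * ‖z‖) * Real.exp (2 * R * ‖z‖ / p) *
        (∫ q, ‖q.1 - q.2‖ ^ p ∂π) ^ (1 / p) := by
  have hball : ∀ᵐ y ∂μ, y ∈ Metric.closedBall 0 R :=
    (mem_ae_iff_prob_eq_one measurableSet_closedBall).2 hμ
  have hball' : ∀ᵐ y ∂μ', y ∈ Metric.closedBall 0 R :=
    (mem_ae_iff_prob_eq_one measurableSet_closedBall).2 hμ'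
  have hR : 0 ≤ R := Metric.nonempty_closedBall.1 (nonempty_of_measure_ne_zero (hμ ▸ one_ne_zero))
  calc ‖gammaAttn z μ - gammaAttn z μ'‖
      ≤ (1 + 2 * R * ‖z‖) * ∫ q, attnCouplingDensity z μ μ' q * ‖q.1 - q.2‖ ∂π :=
        norm_gammaAttn_sub_le hfst hsnd hball hball'
    _ ≤ (1 + 2 * R * ‖z‖) *
          (Real.exp (2 * R * ‖z‖ / p) * (∫ q, ‖q.1 - q.2‖ ^ p ∂π) ^ (1 / p)) := by
        gcongr
        exact integral_attnCouplingDensity_mul_norm_sub_le hp hfst hsnd hball hball'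
    _ = (1 + 2 * R * ‖z‖) * Real.exp (2 * R * ‖z‖ / p) * (∫ q, ‖q.1 - q.2‖ ^ p ∂π) ^ (1 / p) :=
        (mul_assoc _ _ _).symm
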